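/- Let B : ℤ^k × ℤ^k → ℝ be a function that is additive and ℤ-homogeneous in each variable, symmetric, and satisfies B(z,z) = ‖z‖_∞² for a norm ‖·‖_∞ on ℝ^k restricted to ℤ^k. Then B extends uniquely to a symmetric bilinear form on ℝ^k, and this form is an inner product inducing the norm ‖·‖_∞. -/

import Mathlib

/-!
A bilinear form on `ℝ^k` is determined by its Gram matrix on the standard basis, and so is a
biadditive `B` on `ℤ^k`; this gives existence, uniqueness and symmetry of the extension `β`.
The two functions `x ↦ β x x` and `x ↦ ‖x‖²` agree on `ℤ^k`, are homogeneous of degree 2 and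
are continuous (a norm on a finite-dimensional space is convex, hence continuous), so they agree
at every `x = lim ⌊N x⌋ / N`. Positive definiteness is then definiteness of the norm.
-/

open Filter Topology

section BilinearPi

variable {ι κ R M : Type*} [Fintype ι] [Fintype κ] [DecidableEq ι] [DecidableEq κ]
  [CommSemiring R] [AddCommMonoid M] [Module R M]

theorem LinearMap.apply_eq_sum_smul_apply_single (f : (ι → R) →ₗ[R] (κ → R) →ₗ[R] M)
    (x : ι → R) (y : κ → R) :
    f x y = ∑ i, ∑ j, x i • y j • f (Pi.single i 1) (Pi.single j 1) := by
  conv_lhs => rw [← Matrix.toLinearMap₂'_toMatrix' (R := R) f]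
  exact Matrix.toLinearMap₂'_apply _ x y

end BilinearPi

theorem Int.cast_pi_single_one {ι : Type*} [DecidableEq ι] (i : ι) :
    (fun t => ((Pi.single i (1 : ℤ) : ι → ℤ) t : ℝ)) = Pi.single i 1 := by
  funext t
  by_cases h : t = i <;> simp [h]

theorem tendsto_floor_mul_div (a : ℝ) :
    Tendsto (fun N : ℕ => (⌊N * a⌋ : ℝ) / N) atTop (𝓝 a) := by
  have hlower : Tendsto (fun N : ℕ => a - 1 / N) atTop (𝓝 a) := by
    simpa using (tendsto_const_nhds (x := a)).sub tendsto_one_div_atTop_nhds_zero_nat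
  refine tendsto_of_tendsto_of_tendsto_of_le_of_le' hlower tendsto_const_nhds ?_ ?_
  all_goals filter_upwards [eventually_gt_atTop 0] with N hN
  · have hN' : (0 : ℝ) < N := by exact_mod_cast hN
    rw [le_div_iff₀ hN', sub_mul, one_div, inv_mul_cancel₀ hN'.ne', mul_comm]
    exact (Int.sub_one_lt_floor _).le
  · rw [div_le_iff₀ (by positivity), mul_comm]
    exact Int.floor_le _

theorem continuous_of_abs_homogeneous_of_subadditive {E : Type*} [NormedAddCommGroup E]
    [NormedSpace ℝ E] [FiniteDimensional ℝ E] {N : E → ℝ}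
    (hsmul : ∀ (a : ℝ) x, N (a • x) = |a| * N x) (hadd : ∀ x y, N (x + y) ≤ N x + N y) :
    Continuous N := by
  have hconv : ConvexOn ℝ Set.univ N := ⟨convex_univ, fun x _ y _ a b ha hb _ => by
    calc N (a • x + b • y) ≤ N (a • x) + N (b • y) := hadd _ _
      _ = a • N x + b • N y := by
        rw [hsmul, hsmul, abs_of_nonneg ha, abs_of_nonneg hb, smul_eq_mul, smul_eq_mul]⟩
  exact continuousOn_univ.mp (hconv.continuousOn isOpen_univ)

theorem LinearMap.continuous_apply_self {ι : Type*} [Fintype ι] [DecidableEq ι]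
    (β : (ι → ℝ) →ₗ[ℝ] (ι → ℝ) →ₗ[ℝ] ℝ) : Continuous fun x => β x x := by
  have hexp : (fun x => β x x) =
      fun x => ∑ i, ∑ j, x i * (x j * β (Pi.single i 1) (Pi.single j 1)) :=
    funext fun x => β.apply_eq_sum_smul_apply_single x x
  rw [hexp]
  fun_prop

theorem eq_of_continuous_of_homogeneous_of_eq_on_int {ι : Type*} [Fintype ι]
    {f g : (ι → ℝ) → ℝ} (hf : Continuous f) (hg : Continuous g) (n : ℕ)
    (hfn : ∀ (t : ℝ) x, f (t • x) = t ^ n * f x) (hgn : ∀ (t : ℝ) x, g (t • x) = t ^ n * g x)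
    (hfg : ∀ z : ι → ℤ, f (fun i => (z i : ℝ)) = g (fun i => (z i : ℝ))) : f = g := by
  funext x
  set v : ℕ → ι → ℝ := fun N => (N : ℝ)⁻¹ • fun i => (⌊N * x i⌋ : ℝ)
  have hv : Tendsto v atTop (𝓝 x) := tendsto_pi_nhds.2 fun i => by
    simpa [v, div_eq_inv_mul] using tendsto_floor_mul_div (x i)
  have hfgv : f ∘ v = g ∘ v := funext fun N => by
    simp only [Function.comp, v, hfn, hgn, hfg]
  exact tendsto_nhds_unique ((hf.tendsto x).comp hv) (hfgv ▸ (hg.tendsto x).comp hv)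

section IntegerLatticeExtension

variable {ι : Type*} [Fintype ι] [DecidableEq ι] (B : (ι → ℤ) →ₗ[ℤ] (ι → ℤ) →ₗ[ℤ] ℝ)
  {β : (ι → ℝ) →ₗ[ℝ] (ι → ℝ) →ₗ[ℝ] ℝ}

theorem extends_iff_apply_single :
    (∀ z w : ι → ℤ, β (fun i => (z i : ℝ)) (fun i => (w i : ℝ)) = B z w) ↔
      ∀ i j, β (Pi.single i 1) (Pi.single j 1) = B (Pi.single i 1) (Pi.single j 1) := by
  refine ⟨fun h i j => ?_, fun h z w => ?_⟩
  · rw [← h, Int.cast_pi_single_one, Int.cast_pi_single_one]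
  · rw [β.apply_eq_sum_smul_apply_single, B.apply_eq_sum_smul_apply_single]
    simp only [h, Int.cast_smul_eq_zsmul]

theorem existsUnique_extends :
    ∃! β : (ι → ℝ) →ₗ[ℝ] (ι → ℝ) →ₗ[ℝ] ℝ,
      ∀ z w : ι → ℤ, β (fun i => (z i : ℝ)) (fun i => (w i : ℝ)) = B z w := by
  refine (existsUnique_congr fun β => ?_).mpr
    ((LinearMap.toMatrix₂' ℝ).bijective.existsUnique (LinearMap.toMatrix₂' ℤ B))
  rw [extends_iff_apply_single, ← Matrix.ext_iff]
  rfl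

theorem apply_comm_of_extends (hB : ∀ z w, B z w = B w z)
    (hβ : ∀ z w : ι → ℤ, β (fun i => (z i : ℝ)) (fun i => (w i : ℝ)) = B z w) (x y : ι → ℝ) :
    β x y = β y x := by
  rw [extends_iff_apply_single] at hβ
  suffices β.flip = β from (LinearMap.congr_fun₂ this x y).symm
  refine LinearMap.ext_basis (Pi.basisFun ℝ ι) (Pi.basisFun ℝ ι) fun i j => ?_
  simp only [LinearMap.flip_apply, Pi.basisFun_apply, hβ, hB]

end IntegerLatticeExtension

theorem stmt_3_general (k : ℕ) (Nm : (Fin k → ℝ) → ℝ)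
    (hNdef : ∀ x, Nm x = 0 ↔ x = 0)
    (hNsmul : ∀ (a : ℝ) (x), Nm (a • x) = |a| * Nm x)
    (hNtri : ∀ x y, Nm (x + y) ≤ Nm x + Nm y)
    (B : (Fin k → ℤ) → (Fin k → ℤ) → ℝ)
    (hBsymm : ∀ z w, B z w = B w z)
    (hBadd : ∀ z w u, B (z + w) u = B z u + B w u)
    (hBsmul : ∀ (m : ℤ) (z w), B (m • z) w = (m : ℝ) * B z w)
    (hBdiag : ∀ z, B z z = (Nm fun i => (z i : ℝ)) ^ 2) :
    (∃! β : (Fin k → ℝ) →ₗ[ℝ] (Fin k → ℝ) →ₗ[ℝ] ℝ,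
      ∀ z w : Fin k → ℤ, β (fun i => (z i : ℝ)) (fun i => (w i : ℝ)) = B z w) ∧
    ∀ β : (Fin k → ℝ) →ₗ[ℝ] (Fin k → ℝ) →ₗ[ℝ] ℝ,
      (∀ z w : Fin k → ℤ, β (fun i => (z i : ℝ)) (fun i => (w i : ℝ)) = B z w) →
      ((∀ x y, β x y = β y x) ∧ (∀ x, x ≠ 0 → 0 < β x x) ∧ ∀ x, β x x = Nm x ^ 2) := by
  let Bℤ : (Fin k → ℤ) →ₗ[ℤ] (Fin k → ℤ) →ₗ[ℤ] ℝ := LinearMap.mk₂ ℤ B hBadd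
    (fun m z w => by rw [hBsmul, zsmul_eq_mul])
    (fun z w u => by rw [hBsymm, hBadd, hBsymm, hBsymm u])
    (fun m z w => by rw [hBsymm, hBsmul, hBsymm, zsmul_eq_mul])
  refine ⟨existsUnique_extends Bℤ, fun β hβ => ?_⟩
  have hdiag : (fun x => β x x) = fun x => Nm x ^ 2 :=
    eq_of_continuous_of_homogeneous_of_eq_on_int β.continuous_apply_self
      ((continuous_of_abs_homogeneous_of_subadditive hNsmul hNtri).pow 2) 2
      (fun t x => by simp only [map_smul, LinearMap.smul_apply, smul_eq_mul]; ring)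
      (fun t x => by rw [hNsmul, mul_pow, sq_abs])
      (fun z => (hβ z z).trans (hBdiag z))
  refine ⟨apply_comm_of_extends Bℤ hBsymm hβ, fun x hx => ?_, congrFun hdiag⟩
  rw [congrFun hdiag x]
  exact sq_pos_of_ne_zero ((hNdef x).not.mpr hx)

/-- A symmetric, biadditive, ℤ-homogeneous `B : ℤ^k × ℤ^k → ℝ` with
`B(z,z) = ‖z‖²` for a norm `‖·‖ = Nm` on `ℝ^k` extends uniquely to a bilinear form on
`ℝ^k`, and every such extension is symmetric, positive definite, and induces the norm. -/
theorem stmt_3 (k : ℕ) (Nm : (Fin k → ℝ) → ℝ)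
    (hN0 : ∀ x, 0 ≤ Nm x) (hNdef : ∀ x, Nm x = 0 ↔ x = 0)
    (hNsmul : ∀ (a : ℝ) (x), Nm (a • x) = |a| * Nm x)
    (hNtri : ∀ x y, Nm (x + y) ≤ Nm x + Nm y)
    (B : (Fin k → ℤ) → (Fin k → ℤ) → ℝ)
    (hBsymm : ∀ z w, B z w = B w z)
    (hBadd : ∀ z w u, B (z + w) u = B z u + B w u)
    (hBsmul : ∀ (m : ℤ) (z w), B (m • z) w = (m : ℝ) * B z w)
    (hBdiag : ∀ z, B z z = (Nm fun i => (z i : ℝ)) ^ 2) :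
    (∃! β : (Fin k → ℝ) →ₗ[ℝ] (Fin k → ℝ) →ₗ[ℝ] ℝ,
      ∀ z w : Fin k → ℤ, β (fun i => (z i : ℝ)) (fun i => (w i : ℝ)) = B z w) ∧
    ∀ β : (Fin k → ℝ) →ₗ[ℝ] (Fin k → ℝ) →ₗ[ℝ] ℝ,
      (∀ z w : Fin k → ℤ, β (fun i => (z i : ℝ)) (fun i => (w i : ℝ)) = B z w) →
      ((∀ x y, β x y = β y x) ∧ (∀ x, x ≠ 0 → 0 < β x x) ∧ ∀ x, β x x = Nm x ^ 2) :=
  stmt_3_general k Nm hNdef hNsmul hNtri B hBsymm hBadd hBsmul hBdiag
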